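/- Let D be a 2×2 diagonal real matrix with strictly positive diagonal entries, and let θ be a real random variable with Gaussian distribution of mean μ and variance v > 0. Then E[(T_θ D T_θᵀ)⁻¹] = (1 − e^{-2v}) · (tr(D⁻¹)/2) · I₂ + e^{-2v} · T_μ D⁻¹ T_μᵀ, where I₂ is the 2×2 identity matrix. -/

import Mathlib

/-!
Conjugating a diagonal matrix `diag a` by `T_θ` gives `(tr a / 2) • I` plus a traceless part
that depends on `θ` only linearly through `cos 2θ` and `sin 2θ`. Their Gaussian expectations are the
real and imaginary parts of the characteristic function `exp (2iμ - 2v)`, so averaging damps the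
traceless part by `exp (-2v)` and turns `2θ` into `2μ`. Since `T_θ` is orthogonal,
`(T_θ D T_θᵀ)⁻¹ = T_θ D⁻¹ T_θᵀ` with `D⁻¹` again diagonal.
-/

open MeasureTheory ProbabilityTheory Real NNReal Matrix

/-- The 2×2 rotation matrix by angle `θ`. -/
noncomputable def rotMat (θ : ℝ) : Matrix (Fin 2) (Fin 2) ℝ :=
  !![Real.cos θ, -Real.sin θ; Real.sin θ, Real.cos θ]

lemma rotMat_mul_transpose (θ : ℝ) : rotMat θ * (rotMat θ)ᵀ = 1 := by
  ext i j
  fin_cases i <;> fin_cases j <;> simp [rotMat, mul_apply, Fin.sum_univ_two] <;> ring_nf <;> simp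

lemma transpose_mul_rotMat (θ : ℝ) : (rotMat θ)ᵀ * rotMat θ = 1 :=
  mul_eq_one_comm.mp (rotMat_mul_transpose θ)

lemma inv_rotMat_mul_mul_transpose (A : Matrix (Fin 2) (Fin 2) ℝ) (θ : ℝ) :
    (rotMat θ * A * (rotMat θ)ᵀ)⁻¹ = rotMat θ * A⁻¹ * (rotMat θ)ᵀ := by
  rw [Matrix.mul_inv_rev, Matrix.mul_inv_rev, inv_eq_right_inv (rotMat_mul_transpose θ),
    inv_eq_right_inv (transpose_mul_rotMat θ), Matrix.mul_assoc]

lemma rotMat_mul_diagonal_mul_transpose (a : Fin 2 → ℝ) (θ : ℝ) :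
    rotMat θ * diagonal a * (rotMat θ)ᵀ =
      (trace (diagonal a) / 2) • (1 : Matrix (Fin 2) (Fin 2) ℝ)
        + cos (2 * θ) • ((a 0 - a 1) / 2) • !![1, 0; 0, -1]
        + sin (2 * θ) • ((a 0 - a 1) / 2) • !![0, 1; 1, 0] := by
  ext i j
  fin_cases i <;> fin_cases j <;>
    simp [rotMat, mul_apply, Fin.sum_univ_two, vecMul_diagonal, cos_two_mul, sin_two_mul]
  · linear_combination (a 1) * sin_sq_add_cos_sq θ
  · ring
  · ring
  · linear_combination (a 0) * sin_sq_add_cos_sq θ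

lemma integrable_cexp_mul_I (ρ : Measure ℝ) [IsFiniteMeasure ρ] (t : ℝ) :
    Integrable (fun x : ℝ ↦ Complex.exp (t * x * Complex.I)) ρ :=
  (integrable_const (1 : ℝ)).mono (by fun_prop) (by simp [Complex.norm_exp])

lemma integral_cos_mul_eq_re_charFun (ρ : Measure ℝ) [IsFiniteMeasure ρ] (t : ℝ) :
    ∫ x, cos (t * x) ∂ρ = (charFun ρ t).re := by
  rw [charFun_apply_real, ← RCLike.re_to_complex, ← integral_re (integrable_cexp_mul_I ρ t)]
  simp [Complex.exp_re, ← Complex.ofReal_mul]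

lemma integral_sin_mul_eq_im_charFun (ρ : Measure ℝ) [IsFiniteMeasure ρ] (t : ℝ) :
    ∫ x, sin (t * x) ∂ρ = (charFun ρ t).im := by
  rw [charFun_apply_real, ← RCLike.im_to_complex, ← integral_im (integrable_cexp_mul_I ρ t)]
  simp [Complex.exp_im, ← Complex.ofReal_mul]

section Gaussian

variable (μ : ℝ) (v : ℝ≥0) (t : ℝ)

lemma integral_cos_mul_gaussianReal :
    ∫ x, cos (t * x) ∂gaussianReal μ v = exp (-(v * t ^ 2 / 2)) * cos (t * μ) := by
  rw [integral_cos_mul_eq_re_charFun, charFun_gaussianReal, Complex.exp_re]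
  simp [← Complex.ofReal_pow]

lemma integral_sin_mul_gaussianReal :
    ∫ x, sin (t * x) ∂gaussianReal μ v = exp (-(v * t ^ 2 / 2)) * sin (t * μ) := by
  rw [integral_sin_mul_eq_im_charFun, charFun_gaussianReal, Complex.exp_im]
  simp [← Complex.ofReal_pow]

lemma integral_add_cos_mul_add_sin_mul_gaussianReal (c₀ c₁ c₂ : ℝ) :
    ∫ x, c₀ + cos (t * x) * c₁ + sin (t * x) * c₂ ∂gaussianReal μ v
      = c₀ + exp (-(v * t ^ 2 / 2)) * (cos (t * μ) * c₁ + sin (t * μ) * c₂) := by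
  have hcos : Integrable (fun x ↦ cos (t * x) * c₁) (gaussianReal μ v) :=
    ((integrable_const (1 : ℝ)).mono (by fun_prop) (by simp [abs_cos_le_one])).mul_const _
  have hsin : Integrable (fun x ↦ sin (t * x) * c₂) (gaussianReal μ v) :=
    ((integrable_const (1 : ℝ)).mono (by fun_prop) (by simp [abs_sin_le_one])).mul_const _
  rw [integral_add (f := fun x ↦ c₀ + cos (t * x) * c₁) ((integrable_const _).add hcos) hsin,
    integral_add (integrable_const _) hcos, integral_const, integral_mul_const,
    integral_mul_const, integral_cos_mul_gaussianReal,
    integral_sin_mul_gaussianReal]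
  simp only [probReal_univ, smul_eq_mul, one_mul]
  ring

lemma of_integral_add_cos_smul_add_sin_smul_gaussianReal {m n : Type*}
    (M₀ M₁ M₂ : Matrix m n ℝ) :
    (of fun i j ↦ ∫ x, (M₀ + cos (t * x) • M₁ + sin (t * x) • M₂) i j ∂gaussianReal μ v)
      = M₀ + exp (-(v * t ^ 2 / 2)) • (cos (t * μ) • M₁ + sin (t * μ) • M₂) := by
  ext i j
  exact integral_add_cos_mul_add_sin_mul_gaussianReal μ v t _ _ _

end Gaussian

theorem gaussian_expectation_rot_congruence_inv_diagonal_general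
    (d : Fin 2 → ℝ)
    (μ : ℝ) (v : ℝ≥0) :
    (Matrix.of fun i j =>
        ∫ θ, (rotMat θ * Matrix.diagonal d * (rotMat θ)ᵀ)⁻¹ i j ∂(gaussianReal μ v))
      = (1 - Real.exp (-2 * (v : ℝ))) •
          ((Matrix.trace (Matrix.diagonal d)⁻¹ / 2) • (1 : Matrix (Fin 2) (Fin 2) ℝ))
        + Real.exp (-2 * (v : ℝ)) •
          (rotMat μ * (Matrix.diagonal d)⁻¹ * (rotMat μ)ᵀ) := by
  simp_rw [inv_rotMat_mul_mul_transpose, inv_diagonal, rotMat_mul_diagonal_mul_transpose]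
  rw [of_integral_add_cos_smul_add_sin_smul_gaussianReal,
    show -(v * 2 ^ 2 / 2 : ℝ) = -2 * v by ring]
  module

theorem gaussian_expectation_rot_congruence_inv_diagonal
    (d : Fin 2 → ℝ) (hd : ∀ i, 0 < d i)
    (μ : ℝ) (v : ℝ≥0) (hv : 0 < v) :
    (Matrix.of fun i j =>
        ∫ θ, (rotMat θ * Matrix.diagonal d * (rotMat θ)ᵀ)⁻¹ i j ∂(gaussianReal μ v))
      = (1 - Real.exp (-2 * (v : ℝ))) •
          ((Matrix.trace (Matrix.diagonal d)⁻¹ / 2) • (1 : Matrix (Fin 2) (Fin 2) ℝ))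
        + Real.exp (-2 * (v : ℝ)) •
          (rotMat μ * (Matrix.diagonal d)⁻¹ * (rotMat μ)ᵀ) :=
  gaussian_expectation_rot_congruence_inv_diagonal_general d μ v
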